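/- arXiv:2309.01368 — 5 statements merged into one kernel-verified Lean document; each statement's English description precedes it below -/
import Mathlib

section
/- Let Z, E, W be real Banach spaces, let z₀ ∈ Z, let ψ: Z → ℝ, F: Z → E and G: Z → W be continuously Fréchet differentiable in a neighborhood of z₀, let K ⊆ W be a closed convex set with nonempty interior, and assume that the range DF(z₀)(Z) is a closed subspace of E. If z₀ is a local minimizer of ψ on the set {z ∈ Z : F(z) = 0 and G(z) ∈ K} (in particular F(z₀) = 0 and G(z₀) ∈ K), then there exist a real number λ ≥ 0 and continuous linear functionals e* on E and w* on W, with (λ, e*, w*) ≠ (0, 0, 0), such that λ·Dψ(z₀) + e* ∘ DF(z₀) + w* ∘ DG(z₀) = 0 as a continuous linear functional on Z, and w* ∈ N(K, G(z₀)). -/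
/-!
If `DF(z₀)` is not onto, its range is a proper closed subspace and a nonzero functional `e*`
annihilating it gives the multipliers `(0, e*, 0)`.

If `DF(z₀)` is onto, the Lyusternik–Graves theorem turns each `h ∈ ker DF(z₀)` into a curve
`γ t = z₀ + t h + o(t)` inside `{F = 0}`. When moreover `G z₀ + DG(z₀) h ∈ int K`, convexity keeps
`G (γ t)` in `K` for small `t > 0`, so minimality gives `Dψ(z₀) h ≥ 0`. Hence the open convex set
`(-∞, 0) × int K` misses the affine set `{(Dψ(z₀) h, G z₀ + DG(z₀) h) | h ∈ ker DF(z₀)}`. A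
separating functional `(λ, w*)` makes `λ Dψ(z₀) + w* ∘ DG(z₀)` bounded below, hence zero, on
`ker DF(z₀)`, and the open mapping theorem factors it as `-e* ∘ DF(z₀)`; `w* ∈ N(K, G z₀)` because
`K` lies in the closure of its interior.
-/

open Asymptotics Filter Set Topology

theorem Submodule.exists_dual_ne_zero_of_notMem {𝕜 E : Type*} [RCLike 𝕜] [NormedAddCommGroup E]
    [NormedSpace 𝕜 E] {S : Submodule 𝕜 E} (hS : IsClosed (S : Set E)) {x : E} (hx : x ∉ S) :
    ∃ e : StrongDual 𝕜 E, e x ≠ 0 ∧ ∀ y ∈ S, e y = 0 := by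
  obtain ⟨f, hf⟩ := SeparatingDual.exists_ne_zero (R := 𝕜)
    (show S.mkQL x ≠ 0 from (Submodule.Quotient.mk_eq_zero S).not.2 hx)
  exact ⟨f.comp S.mkQL, hf, fun y hy ↦ by simp [(Submodule.Quotient.mk_eq_zero S).2 hy]⟩

theorem ContinuousLinearMap.exists_comp_eq_of_surjective {𝕜 Z E F : Type*}
    [NontriviallyNormedField 𝕜]
    [NormedAddCommGroup Z] [NormedSpace 𝕜 Z] [CompleteSpace Z]
    [NormedAddCommGroup E] [NormedSpace 𝕜 E] [CompleteSpace E]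
    [NormedAddCommGroup F] [NormedSpace 𝕜 F]
    {B : Z →L[𝕜] E} (hB : Function.Surjective B) {g : Z →L[𝕜] F}
    (hg : ∀ z, B z = 0 → g z = 0) : ∃ e : E →L[𝕜] F, e.comp B = g := by
  let e : E →ₗ[𝕜] F :=
    (LinearMap.ker (B : Z →ₗ[𝕜] E)).liftQ g hg ∘ₗ
      ((B : Z →ₗ[𝕜] E).quotKerEquivOfSurjective hB).symm.toLinearMap
  have he : ∀ z, e (B z) = g z := fun z ↦ by
    have : ((B : Z →ₗ[𝕜] E).quotKerEquivOfSurjective hB).symm (B z) = Submodule.Quotient.mk z :=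
      (LinearEquiv.symm_apply_eq _).2 rfl
    simp only [e, LinearMap.comp_apply, LinearEquiv.coe_coe, this]; rfl
  have hcont : Continuous e := by
    rw [(B.isOpenMap hB).isQuotientMap B.continuous hB |>.continuous_iff]
    exact (show ⇑e ∘ B = g from funext he) ▸ g.continuous
  exact ⟨⟨e, hcont⟩, ContinuousLinearMap.ext he⟩

theorem nonneg_and_le_of_forall_neg_mul_add_lt {lam c u : ℝ} (h : ∀ r < 0, r * lam + c < u) :
    0 ≤ lam ∧ c ≤ u := by
  refine ⟨not_lt.1 fun hlam ↦ ?_, ?_⟩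
  · have hr : u - c ≤ min (-1) ((u - c) / lam) * lam :=
      (le_div_iff_of_neg hlam).1 (min_le_right _ _)
    linarith [h _ ((min_le_left (-1) ((u - c) / lam)).trans_lt neg_one_lt_zero)]
  · have hlim : Tendsto (fun r : ℝ ↦ r * lam + c) (𝓝[<] 0) (𝓝 c) := by
      have : Continuous (fun r : ℝ ↦ r * lam + c) := by fun_prop
      simpa using (this.tendsto 0).mono_left nhdsWithin_le_nhds
    exact le_of_tendsto hlim (eventually_nhdsWithin_of_forall fun r hr ↦ (h r hr).le)

theorem apply_eq_zero_of_forall_mem_le {M 𝓕 : Type*} [AddCommGroup M] [Module ℝ M]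
    [FunLike 𝓕 M ℝ] [LinearMapClass 𝓕 ℝ M ℝ] (f : 𝓕) {V : Submodule ℝ M} {c : ℝ}
    (hc : ∀ x ∈ V, c ≤ f x) {x : M} (hx : x ∈ V) : f x = 0 := by
  by_contra hfx
  have := hc (((c - 1) / f x) • x) (V.smul_mem _ hx)
  rw [map_smul, smul_eq_mul, div_mul_cancel₀ _ hfx] at this
  linarith

theorem exists_separating_multipliers {Z W : Type*} [NormedAddCommGroup Z] [NormedSpace ℝ Z]
    [NormedAddCommGroup W] [NormedSpace ℝ W] {A : StrongDual ℝ Z} {C : Z →L[ℝ] W}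
    {V : Submodule ℝ Z} {K : Set W} {g₀ : W} (hK : Convex ℝ K) (hKint : (interior K).Nonempty)
    (hA : ∀ h ∈ V, g₀ + C h ∈ interior K → 0 ≤ A h) :
    ∃ (lam : ℝ) (w : StrongDual ℝ W), 0 ≤ lam ∧ (lam, w) ≠ 0 ∧
      (∀ h ∈ V, lam * A h + w (C h) = 0) ∧ ∀ k ∈ K, w k ≤ w g₀ := by
  let L : Z →ᵃ[ℝ] ℝ × W := (A.prod C).toLinearMap.toAffineMap + AffineMap.const ℝ Z (0, g₀)
  have hL : ∀ h, L h = (A h, g₀ + C h) := fun h ↦ by simp [L, add_comm]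
  have hdisj : Disjoint (Iio 0 ×ˢ interior K) (L '' V) := by
    rw [Set.disjoint_left]
    rintro _ ⟨hneg, hint⟩ ⟨h, hV, rfl⟩
    rw [hL] at hneg hint
    exact (hA h hV hint).not_gt hneg
  obtain ⟨f, u, hfP, hfQ⟩ := geometric_hahn_banach_open ((convex_Iio 0).prod hK.interior)
    (isOpen_Iio.prod isOpen_interior) (V.convex.affine_image L) hdisj
  set lam := f (1, 0)
  set w := f.comp (ContinuousLinearMap.inr ℝ ℝ W)
  have hf : ∀ r y, f (r, y) = r * lam + w y := fun r y ↦ by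
    have : (r, y) = r • ((1 : ℝ), (0 : W)) + (0, y) := by simp
    rw [this, map_add, map_smul, smul_eq_mul]
    rfl
  obtain ⟨y₀, hy₀⟩ := hKint
  have hP : ∀ y ∈ interior K, ∀ r < 0, r * lam + w y < u := fun y hy r hr ↦
    hf r y ▸ hfP _ ⟨hr, hy⟩
  have hQ : ∀ h ∈ V, u ≤ A h * lam + w (g₀ + C h) := fun h hV ↦
    hf _ _ ▸ hL h ▸ hfQ _ ⟨h, hV, rfl⟩
  have hu : u ≤ w g₀ := by simpa using hQ 0 V.zero_mem
  have hwu : ∀ y ∈ closure (interior K), w y ≤ u :=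
    closure_minimal (fun y hy ↦ (nonneg_and_le_of_forall_neg_mul_add_lt (hP y hy)).2)
      (isClosed_le w.continuous continuous_const)
  refine ⟨lam, w, (nonneg_and_le_of_forall_neg_mul_add_lt (hP y₀ hy₀)).1, ?_, ?_, ?_⟩
  · intro h0
    rw [Prod.mk_eq_zero] at h0
    have := hP y₀ hy₀ (-1) neg_one_lt_zero
    simp only [h0.1, h0.2, zero_apply] at this hu
    linarith
  · refine fun h hV ↦ apply_eq_zero_of_forall_mem_le (lam • A + w.comp C) (c := u - w g₀)
      (fun x hx ↦ ?_) hV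
    have := hQ x hx
    simp only [map_add, add_apply, smul_apply,
      ContinuousLinearMap.comp_apply, smul_eq_mul] at this ⊢
    linarith
  · intro k hk
    refine (hwu k ?_).trans hu
    rw [hK.closure_interior_eq_closure_of_nonempty_interior ⟨y₀, hy₀⟩]
    exact subset_closure hk

theorem exists_multipliers_of_surjective {Z E W : Type*}
    [NormedAddCommGroup Z] [NormedSpace ℝ Z] [CompleteSpace Z]
    [NormedAddCommGroup E] [NormedSpace ℝ E] [CompleteSpace E]
    [NormedAddCommGroup W] [NormedSpace ℝ W]
    {A : StrongDual ℝ Z} {B : Z →L[ℝ] E} {C : Z →L[ℝ] W} {K : Set W} {g₀ : W}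
    (hB : Function.Surjective B) (hK : Convex ℝ K) (hKint : (interior K).Nonempty)
    (hA : ∀ h, B h = 0 → g₀ + C h ∈ interior K → 0 ≤ A h) :
    ∃ (lam : ℝ) (e : StrongDual ℝ E) (w : StrongDual ℝ W), 0 ≤ lam ∧ (lam, e, w) ≠ (0, 0, 0) ∧
      lam • A + e.comp B + w.comp C = 0 ∧ ∀ k ∈ K, w (k - g₀) ≤ 0 := by
  obtain ⟨lam, w, hlam, hne, hker, hcone⟩ :=
    exists_separating_multipliers (V := LinearMap.ker (B : Z →ₗ[ℝ] E)) hK hKint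
      fun h hh ↦ hA h hh
  obtain ⟨e, he⟩ := ContinuousLinearMap.exists_comp_eq_of_surjective hB
    (g := lam • A + w.comp C) fun h hh ↦ by simpa using hker h hh
  refine ⟨lam, -e, w, hlam, fun h ↦ hne ?_, ?_, fun k hk ↦ ?_⟩
  · simp_all [Prod.ext_iff]
  · rw [ContinuousLinearMap.neg_comp, he]
    abel
  · rw [map_sub]
    linarith [hcone k hk]

/-- Lyusternik–Graves metric regularity. -/
theorem HasStrictFDerivAt.exists_eventually_exists_eq_norm_sub_le {𝕜 E F : Type*}
    [NontriviallyNormedField 𝕜] [NormedAddCommGroup E] [NormedSpace 𝕜 E] [CompleteSpace E]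
    [NormedAddCommGroup F] [NormedSpace 𝕜 F] [CompleteSpace F]
    {f : E → F} {f' : E →L[𝕜] F} {a : E} (hf : HasStrictFDerivAt f f' a)
    (hsurj : f'.range = ⊤) :
    ∃ C : ℝ, ∀ᶠ x in 𝓝 a, ∃ z, f z = f a ∧ ‖z - x‖ ≤ C * ‖f x - f a‖ := by
  set σ := f'.nonlinearRightInverseOfSurjective hsurj
  have hσ : 0 < σ.nnnorm := f'.nonlinearRightInverseOfSurjective_nnnorm_pos hsurj
  set M : ℝ := (σ.nnnorm : ℝ)
  obtain ⟨s, hs, hfs⟩ := hf.approximates_deriv_on_nhds (c := σ.nnnorm⁻¹ / 2)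
    (Or.inr (by simpa using hσ))
  obtain ⟨ρ, hρ, hρs⟩ := Metric.mem_nhds_iff.1 hs
  have hfa : Tendsto (fun x ↦ 2 * M * ‖f x - f a‖) (𝓝 a) (𝓝 0) := by
    simpa using (hf.continuousAt.tendsto.sub_const (f a)).norm.const_mul (2 * M)
  refine ⟨2 * M, ?_⟩
  filter_upwards [Metric.ball_mem_nhds a (half_pos hρ), hfa.eventually (gt_mem_nhds (half_pos hρ))]
    with x hx hfx
  have hball : Metric.closedBall x (2 * M * ‖f x - f a‖) ⊆ s := fun y hy ↦ by
    refine hρs (Metric.mem_ball.2 ?_)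
    linarith [dist_triangle y x a, Metric.mem_closedBall.1 hy, Metric.mem_ball.1 hx]
  obtain ⟨z, hz, hfz⟩ := hfs.surjOn_closedBall_of_nonlinearRightInverse σ (by positivity) hball
    (show f a ∈ _ by
      have hradius : ((σ.nnnorm : ℝ)⁻¹ - ↑(σ.nnnorm⁻¹ / 2)) * (2 * M * ‖f x - f a‖) =
          ‖f x - f a‖ := by
        have : M ≠ 0 := by positivity
        push_cast; field_simp; ring
      rw [hradius, Metric.mem_closedBall, dist_comm, dist_eq_norm])
  exact ⟨z, hfz, by rwa [← dist_eq_norm]⟩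

theorem HasStrictFDerivAt.exists_hasDerivAt_eq_of_surj {E F : Type*}
    [NormedAddCommGroup E] [NormedSpace ℝ E] [CompleteSpace E]
    [NormedAddCommGroup F] [NormedSpace ℝ F] [CompleteSpace F]
    {f : E → F} {f' : E →L[ℝ] F} {a : E} (hf : HasStrictFDerivAt f f' a) (hsurj : f'.range = ⊤)
    {v : E} (hv : f' v = 0) :
    ∃ γ : ℝ → E, γ 0 = a ∧ HasDerivAt γ v 0 ∧ ∀ᶠ t in 𝓝 0, f (γ t) = f a := by
  obtain ⟨C, hC⟩ := hf.exists_eventually_exists_eq_norm_sub_le hsurj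
  have hline : Tendsto (fun t : ℝ ↦ a + t • v) (𝓝 0) (𝓝 a) := by
    simpa using ((continuous_id.smul continuous_const).const_add a).tendsto (0 : ℝ)
  obtain ⟨γ, hγ⟩ := (hline.eventually hC).choice
  have hγ0 : γ 0 = a := by
    obtain ⟨-, h0⟩ := hγ.self_of_nhds
    simpa [sub_eq_zero] using h0
  refine ⟨γ, hγ0, ?_, hγ.mono fun t ht ↦ ht.1⟩
  have hFline : HasDerivAt (fun t : ℝ ↦ f (a + t • v)) 0 0 := by
    simpa [hv, Function.comp_def] using hf.hasFDerivAt.comp_hasDerivAt_of_eq (0 : ℝ)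
      ((hasDerivAt_id (0 : ℝ)).smul_const v |>.const_add a) (by simp)
  rw [hasDerivAt_iff_isLittleO] at hFline ⊢
  refine IsBigO.trans_isLittleO (IsBigO.of_bound C ?_) hFline
  filter_upwards [hγ] with t ht
  simpa [hγ0, sub_sub, norm_sub_rev] using ht.2

theorem Convex.eventually_mem_of_hasDerivWithinAt {W : Type*} [NormedAddCommGroup W]
    [NormedSpace ℝ W] {K : Set W} (hK : Convex ℝ K) {φ : ℝ → W} {v : W}
    (hφ : HasDerivWithinAt φ v (Ioi 0) 0) (h0 : φ 0 ∈ K) (hv : φ 0 + v ∈ interior K) :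
    ∀ᶠ t in 𝓝[>] 0, φ t ∈ K := by
  rw [hasDerivWithinAt_iff_tendsto_slope' self_notMem_Ioi] at hφ
  filter_upwards [(hφ.const_add (φ 0)).eventually (isOpen_interior.mem_nhds hv),
    Ioo_mem_nhdsGT one_pos] with t ht ht01
  have hslope : t • slope φ 0 t = φ t - φ 0 := by simpa using sub_smul_slope φ 0 t
  rw [← add_sub_cancel (φ 0) (φ t), ← hslope]
  exact hK.add_smul_mem h0 (interior_subset ht) ⟨ht01.1.le, ht01.2.le⟩

theorem IsLocalMinOn.zero_le_apply_of_linearized_feasible {Z E W : Type*}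
    [NormedAddCommGroup Z] [NormedSpace ℝ Z] [CompleteSpace Z]
    [NormedAddCommGroup E] [NormedSpace ℝ E] [CompleteSpace E]
    [NormedAddCommGroup W] [NormedSpace ℝ W]
    {ψ : Z → ℝ} {F : Z → E} {G : Z → W} {K : Set W} {z₀ : Z}
    {A : StrongDual ℝ Z} {B : Z →L[ℝ] E} {C : Z →L[ℝ] W}
    (hmin : IsLocalMinOn ψ {z | F z = 0 ∧ G z ∈ K} z₀) (hψ : HasFDerivAt ψ A z₀)
    (hF : HasStrictFDerivAt F B z₀) (hB : B.range = ⊤) (hG : HasFDerivAt G C z₀)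
    (hK : Convex ℝ K) (hF₀ : F z₀ = 0) (hG₀ : G z₀ ∈ K) {h : Z} (hBh : B h = 0)
    (hCh : G z₀ + C h ∈ interior K) : 0 ≤ A h := by
  obtain ⟨γ, rfl, hγ, hFγ⟩ := hF.exists_hasDerivAt_eq_of_surj hB hBh
  have hGγ : ∀ᶠ t in 𝓝[>] 0, G (γ t) ∈ K :=
    hK.eventually_mem_of_hasDerivWithinAt (φ := G ∘ γ)
      (hG.comp_hasDerivAt 0 hγ).hasDerivWithinAt hG₀ hCh
  have hγS : Tendsto γ (𝓝[>] 0) (𝓝[{z | F z = 0 ∧ G z ∈ K}] (γ 0)) :=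
    tendsto_nhdsWithin_iff.2 ⟨hγ.continuousAt.tendsto.mono_left nhdsWithin_le_nhds,
      (hFγ.filter_mono nhdsWithin_le_nhds).and hGγ |>.mono fun t ht ↦ ⟨ht.1.trans hF₀, ht.2⟩⟩
  have hderiv : HasDerivAt (ψ ∘ γ) (A h) 0 := hψ.comp_hasDerivAt 0 hγ
  have hminγ : IsLocalMinOn (ψ ∘ γ) (Ioi 0) 0 := hmin.comp_tendsto hγS
  simpa using hminγ.hasFDerivWithinAt_nonneg hderiv.hasDerivWithinAt.hasFDerivWithinAt
    (one_mem_posTangentConeAt_iff_frequently.2 eventually_mem_nhdsWithin.frequently)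

theorem stmt0_general
    {Z E W : Type*}
    [NormedAddCommGroup Z] [NormedSpace ℝ Z] [CompleteSpace Z]
    [NormedAddCommGroup E] [NormedSpace ℝ E] [CompleteSpace E]
    [NormedAddCommGroup W] [NormedSpace ℝ W]
    (z₀ : Z) (ψ : Z → ℝ) (F : Z → E) (G : Z → W) (K : Set W)
    (hψ : ContDiffAt ℝ 1 ψ z₀) (hF : ContDiffAt ℝ 1 F z₀) (hG : ContDiffAt ℝ 1 G z₀)
    (hKconv : Convex ℝ K) (hKint : (interior K).Nonempty)
    (hrange : IsClosed (Set.range (fderiv ℝ F z₀) : Set E))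
    (hmin : IsLocalMinOn ψ {z : Z | F z = 0 ∧ G z ∈ K} z₀)
    (hF₀ : F z₀ = 0) (hG₀ : G z₀ ∈ K) :
    ∃ (lam : ℝ) (e : E →L[ℝ] ℝ) (w : W →L[ℝ] ℝ),
      0 ≤ lam ∧
      (lam, e, w) ≠ (0, 0, 0) ∧
      lam • (fderiv ℝ ψ z₀) + e.comp (fderiv ℝ F z₀) + w.comp (fderiv ℝ G z₀) = 0 ∧
      (∀ k ∈ K, w (k - G z₀) ≤ 0) := by
  by_cases hsurj : Function.Surjective (fderiv ℝ F z₀)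
  · exact exists_multipliers_of_surjective hsurj hKconv hKint fun h hBh hCh ↦
      hmin.zero_le_apply_of_linearized_feasible (hψ.differentiableAt one_ne_zero).hasFDerivAt
        (hF.hasStrictFDerivAt one_ne_zero) (LinearMap.range_eq_top.2 hsurj)
        (hG.differentiableAt one_ne_zero).hasFDerivAt hKconv hF₀ hG₀ hBh hCh
  · obtain ⟨x, hx⟩ := not_forall.1 hsurj
    obtain ⟨e, hex, he⟩ := Submodule.exists_dual_ne_zero_of_notMem
      (S := LinearMap.range (fderiv ℝ F z₀ : Z →ₗ[ℝ] E)) (by rwa [LinearMap.coe_range])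
      (x := x) (by simpa using hx)
    refine ⟨0, e, 0, le_rfl, fun h ↦ hex ?_, ?_, fun k _ ↦ by simp⟩
    · simp_all [Prod.ext_iff]
    · ext z
      simpa using he _ (LinearMap.mem_range_self _ z)

/-- Fritz-John type first-order necessary optimality conditions
for a local minimizer of `ψ` subject to `F z = 0` and `G z ∈ K`, assuming the
range of `DF(z₀)` is a closed subspace. -/
theorem stmt0
    {Z E W : Type*}
    [NormedAddCommGroup Z] [NormedSpace ℝ Z] [CompleteSpace Z]
    [NormedAddCommGroup E] [NormedSpace ℝ E] [CompleteSpace E]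
    [NormedAddCommGroup W] [NormedSpace ℝ W] [CompleteSpace W]
    (z₀ : Z) (ψ : Z → ℝ) (F : Z → E) (G : Z → W) (K : Set W)
    (hψ : ContDiffAt ℝ 1 ψ z₀) (hF : ContDiffAt ℝ 1 F z₀) (hG : ContDiffAt ℝ 1 G z₀)
    (hKclosed : IsClosed K) (hKconv : Convex ℝ K) (hKint : (interior K).Nonempty)
    (hrange : IsClosed (Set.range (fderiv ℝ F z₀) : Set E))
    (hmin : IsLocalMinOn ψ {z : Z | F z = 0 ∧ G z ∈ K} z₀)
    (hF₀ : F z₀ = 0) (hG₀ : G z₀ ∈ K) :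
    ∃ (lam : ℝ) (e : E →L[ℝ] ℝ) (w : W →L[ℝ] ℝ),
      0 ≤ lam ∧
      (lam, e, w) ≠ (0, 0, 0) ∧
      lam • (fderiv ℝ ψ z₀) + e.comp (fderiv ℝ F z₀) + w.comp (fderiv ℝ G z₀) = 0 ∧
      (∀ k ∈ K, w (k - G z₀) ≤ 0) :=
  stmt0_general z₀ ψ F G K hψ hF hG hKconv hKint hrange hmin hF₀ hG₀
end

section
/- Let Z, E, W be real Banach spaces, let a: Z → ℝ be a continuous linear functional, let T: Z → E be a surjective continuous linear map, let S: Z → W be a continuous linear map, let K ⊆ W be a convex set with nonempty interior, and let k₀ ∈ K. Define C ⊆ ℝ × E × W as the set of all triples (μ, e, w) for which there exists z ∈ Z with a(z) < μ, T(z) = e, and S(z) − w ∈ cone(int K − k₀), where cone(S) := {t·s : t > 0, s ∈ S}. Then C is an open convex subset of ℝ × E × W. -/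
/-!
With `Q` the cone over `int K - k₀`, which is open and convex, `C` is the image of the open convex
set `{(μ, z, w) | μ - a z > 0, S z - w ∈ Q}` (a preimage under a continuous linear map) under
`(μ, z, w) ↦ (μ, T z, w)`. This map is linear, and open by the open mapping theorem for `T`.
-/

open Set

section Cone

variable {W : Type*} [AddCommGroup W] [Module ℝ W]

theorem convex_setOf_exists_smul_sub {K : Set W} (hK : Convex ℝ K) (k₀ : W) :
    Convex ℝ {x : W | ∃ t : ℝ, 0 < t ∧ ∃ s ∈ K, x = t • (s - k₀)} := by
  convert (ConvexCone.hull ℝ (-k₀ +ᵥ K)).convex using 1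
  rw [ConvexCone.coe_hull_of_convex (hK.vadd _)]
  ext x
  simp only [mem_ofPred_eq, mem_smul_set, mem_vadd_set, vadd_eq_add, exists_exists_and_eq_and,
    neg_add_eq_sub, eq_comm (a := x)]

variable [TopologicalSpace W] [IsTopologicalAddGroup W] [ContinuousConstSMul ℝ W]

theorem IsOpen.setOf_exists_smul_sub {U : Set W} (hU : IsOpen U) (k₀ : W) :
    IsOpen {x : W | ∃ t : ℝ, 0 < t ∧ ∃ s ∈ U, x = t • (s - k₀)} := by
  refine isOpen_iff_forall_mem_open.2 ?_
  rintro _ ⟨t, ht, s, hs, rfl⟩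
  refine ⟨(fun s => t • (s - k₀)) '' U, ?_, ?_, mem_image_of_mem _ hs⟩
  · rintro _ ⟨s', hs', rfl⟩
    exact ⟨t, ht, s', hs', rfl⟩
  · exact ((isOpenMap_smul₀ ht.ne').comp (isOpenMap_sub_right k₀)) U hU

end Cone

section

variable {Z E W : Type*}
  [NormedAddCommGroup Z] [NormedSpace ℝ Z]
  [NormedAddCommGroup E] [NormedSpace ℝ E]
  [NormedAddCommGroup W] [NormedSpace ℝ W]
  (a : Z →L[ℝ] ℝ) (T : Z →L[ℝ] E) (S : Z →L[ℝ] W) {Q : Set W}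

open ContinuousLinearMap in
def slackMap : ℝ × Z × W →L[ℝ] ℝ × W :=
  (fst ℝ ℝ (Z × W) - a ∘L fst ℝ Z W ∘L snd ℝ ℝ (Z × W)).prod
    (S ∘L fst ℝ Z W ∘L snd ℝ ℝ (Z × W) - snd ℝ Z W ∘L snd ℝ ℝ (Z × W))

theorem setOf_exists_lt_and_sub_mem_eq_image :
    {p : ℝ × E × W | ∃ z, a z < p.1 ∧ T z = p.2.1 ∧ S z - p.2.2 ∈ Q} =
      ((ContinuousLinearMap.id ℝ ℝ).prodMap (T.prodMap (ContinuousLinearMap.id ℝ W))) ''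
        (slackMap a S ⁻¹' (Ioi 0 ×ˢ Q)) := by
  ext ⟨μ, e, w⟩
  constructor
  · rintro ⟨z, hlt, rfl, hQ⟩
    exact ⟨(μ, z, w), ⟨sub_pos.2 hlt, hQ⟩, rfl⟩
  · rintro ⟨⟨μ, z, w⟩, ⟨hlt, hQ⟩, ⟨⟩⟩
    exact ⟨z, sub_pos.1 hlt, rfl, hQ⟩

theorem convex_setOf_exists_lt_and_sub_mem (hQ : Convex ℝ Q) :
    Convex ℝ {p : ℝ × E × W | ∃ z, a z < p.1 ∧ T z = p.2.1 ∧ S z - p.2.2 ∈ Q} := by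
  rw [setOf_exists_lt_and_sub_mem_eq_image]
  exact (((convex_Ioi 0).prod hQ).linear_preimage _).linear_image _

theorem isOpen_setOf_exists_lt_and_sub_mem [CompleteSpace Z] [CompleteSpace E]
    (hT : Function.Surjective T) (hQ : IsOpen Q) :
    IsOpen {p : ℝ × E × W | ∃ z, a z < p.1 ∧ T z = p.2.1 ∧ S z - p.2.2 ∈ Q} := by
  rw [setOf_exists_lt_and_sub_mem_eq_image]
  exact (IsOpenMap.id.prodMap ((T.isOpenMap hT).prodMap IsOpenMap.id)) _
    ((isOpen_Ioi.prod hQ).preimage (slackMap a S).continuous)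

end

theorem stmt3_general
    {Z E W : Type*}
    [NormedAddCommGroup Z] [NormedSpace ℝ Z] [CompleteSpace Z]
    [NormedAddCommGroup E] [NormedSpace ℝ E] [CompleteSpace E]
    [NormedAddCommGroup W] [NormedSpace ℝ W]
    (a : Z →L[ℝ] ℝ) (T : Z →L[ℝ] E) (S : Z →L[ℝ] W)
    (hTsurj : Function.Surjective T)
    (K : Set W) (hKconv : Convex ℝ K)
    (k₀ : W)
    (C : Set (ℝ × E × W))
    (hC : C = {p : ℝ × E × W | ∃ z : Z, a z < p.1 ∧ T z = p.2.1 ∧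
      S z - p.2.2 ∈ {x : W | ∃ t : ℝ, 0 < t ∧ ∃ s ∈ interior K, x = t • (s - k₀)}}) :
    IsOpen C ∧ Convex ℝ C := by
  subst hC
  exact ⟨isOpen_setOf_exists_lt_and_sub_mem a T S hTsurj
      (isOpen_interior.setOf_exists_smul_sub k₀),
    convex_setOf_exists_lt_and_sub_mem a T S (convex_setOf_exists_smul_sub hKconv.interior k₀)⟩

/-- The set `C` of triples `(μ, e, w)` admitting `z` with
`a z < μ`, `T z = e`, and `S z − w ∈ cone(int K − k₀)` is open and convex. -/
theorem stmt3
    {Z E W : Type*}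
    [NormedAddCommGroup Z] [NormedSpace ℝ Z] [CompleteSpace Z]
    [NormedAddCommGroup E] [NormedSpace ℝ E] [CompleteSpace E]
    [NormedAddCommGroup W] [NormedSpace ℝ W] [CompleteSpace W]
    (a : Z →L[ℝ] ℝ) (T : Z →L[ℝ] E) (S : Z →L[ℝ] W)
    (hTsurj : Function.Surjective T)
    (K : Set W) (hKconv : Convex ℝ K) (hKint : (interior K).Nonempty)
    (k₀ : W) (hk₀ : k₀ ∈ K)
    (C : Set (ℝ × E × W))
    (hC : C = {p : ℝ × E × W | ∃ z : Z, a z < p.1 ∧ T z = p.2.1 ∧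
      S z - p.2.2 ∈ {x : W | ∃ t : ℝ, 0 < t ∧ ∃ s ∈ interior K, x = t • (s - k₀)}}) :
    IsOpen C ∧ Convex ℝ C :=
  stmt3_general a T S hTsurj K hKconv k₀ C hC
end

section
/- Let Z, E, W be real Banach spaces, let T: Z → E be a surjective continuous linear map, let S: Z → W be a continuous linear map, let K ⊆ W be a convex set with nonempty interior, and let k₀ ∈ K. Assume there exists z̃ ∈ Z with T(z̃) = 0 and k₀ + S(z̃) ∈ int K. If continuous linear functionals e* on E and w* on W satisfy e* ∘ T + w* ∘ S = 0 (as a functional on Z) and w* ∈ N(K, k₀), then e* = 0 and w* = 0. -/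
/-! A multiplier `w*` in the normal cone attains its maximum over `K` at `k₀`. Evaluating
`e* ∘ T + w* ∘ S = 0` at `z̃ ∈ ker T` gives `w*(S z̃) = 0`, so the maximum is also attained at the
interior point `k₀ + S z̃`; a linear functional with a local maximum vanishes. Then `e* ∘ T = 0`
and surjectivity of `T` force `e* = 0`. -/

theorem ContinuousLinearMap.eq_zero_of_isLocalMax {W : Type*} [NormedAddCommGroup W]
    [NormedSpace ℝ W] {w : W →L[ℝ] ℝ} {p : W} (h : IsLocalMax w p) : w = 0 :=
  h.hasFDerivAt_eq_zero w.hasFDerivAt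

theorem ContinuousLinearMap.eq_zero_of_le_of_mem_interior {W : Type*} [NormedAddCommGroup W]
    [NormedSpace ℝ W] {w : W →L[ℝ] ℝ} {K : Set W} {p : W} (hp : p ∈ interior K)
    (hle : ∀ k ∈ K, w k ≤ w p) : w = 0 :=
  eq_zero_of_isLocalMax <| Filter.mem_of_superset (mem_interior_iff_mem_nhds.mp hp) hle

theorem stmt4_general
    {Z E W : Type*}
    [NormedAddCommGroup Z] [NormedSpace ℝ Z]
    [NormedAddCommGroup E] [NormedSpace ℝ E]
    [NormedAddCommGroup W] [NormedSpace ℝ W]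
    (T : Z →L[ℝ] E) (S : Z →L[ℝ] W)
    (hTsurj : Function.Surjective T)
    (K : Set W)
    (k₀ : W)
    (zt : Z) (hzt : T zt = 0) (hzt' : k₀ + S zt ∈ interior K)
    (e : E →L[ℝ] ℝ) (w : W →L[ℝ] ℝ)
    (hsum : e.comp T + w.comp S = 0)
    (hw : ∀ k ∈ K, w (k - k₀) ≤ 0) :
    e = 0 ∧ w = 0 := by
  have hsum_apply (z : Z) : e (T z) + w (S z) = 0 := congr($hsum z)
  have hwSzt : w (S zt) = 0 := by simpa [hzt] using hsum_apply zt
  have hw0 : w = 0 :=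
    w.eq_zero_of_le_of_mem_interior hzt' fun k hk => by simpa [hwSzt] using hw k hk
  refine ⟨?_, hw0⟩
  ext x
  obtain ⟨z, rfl⟩ := hTsurj x
  simpa [hw0] using hsum_apply z

/-- If the Robinson-type condition holds (`T` surjective and there is
`z̃ ∈ ker T` with `k₀ + S z̃ ∈ int K`), then the only multipliers `(e*, w*)` with
`e* ∘ T + w* ∘ S = 0` and `w* ∈ N(K, k₀)` are the trivial ones. -/
theorem stmt4
    {Z E W : Type*}
    [NormedAddCommGroup Z] [NormedSpace ℝ Z] [CompleteSpace Z]
    [NormedAddCommGroup E] [NormedSpace ℝ E] [CompleteSpace E]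
    [NormedAddCommGroup W] [NormedSpace ℝ W] [CompleteSpace W]
    (T : Z →L[ℝ] E) (S : Z →L[ℝ] W)
    (hTsurj : Function.Surjective T)
    (K : Set W) (hKconv : Convex ℝ K) (hKint : (interior K).Nonempty)
    (k₀ : W) (hk₀ : k₀ ∈ K)
    (zt : Z) (hzt : T zt = 0) (hzt' : k₀ + S zt ∈ interior K)
    (e : E →L[ℝ] ℝ) (w : W →L[ℝ] ℝ)
    (hsum : e.comp T + w.comp S = 0)
    (hw : ∀ k ∈ K, w (k - k₀) ≤ 0) :
    e = 0 ∧ w = 0 :=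
  stmt4_general T S hTsurj K k₀ zt hzt hzt' e w hsum hw
end

section
/- Let (Q, μ) be a measure space with μ σ-finite, let e ∈ L¹(μ) be real-valued, and let h ∈ L^∞(μ) be real-valued with h ≤ 0 μ-almost everywhere. Suppose that for every real-valued η ∈ L^∞(μ) with η ≤ 0 μ-almost everywhere one has ∫ e·(η − h) dμ ≤ 0. Then e ≥ 0 μ-almost everywhere and e·h = 0 μ-almost everywhere. -/
/-!
Testing the variational inequality with `η = h - 𝟙_s` gives `∫_s e ≥ 0` for every measurable `s`,
hence `e ≥ 0` a.e. Then `e·h ≤ 0` a.e., while the test function `η = 0` gives `∫ e·h ≥ 0`;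
a nonpositive integrable function with nonnegative integral vanishes a.e.
-/

open MeasureTheory

namespace MeasureTheory

variable {Q : Type*} [MeasurableSpace Q] {μ : Measure Q} {e h : Q → ℝ}

def VariationalIneqNonpos (μ : Measure Q) (e h : Q → ℝ) : Prop :=
  ∀ η : Q → ℝ, MemLp η ⊤ μ → (∀ᵐ q ∂μ, η q ≤ 0) → ∫ q, e q * (η q - h q) ∂μ ≤ 0

namespace VariationalIneqNonpos

theorem setIntegral_nonneg (hvar : VariationalIneqNonpos μ e h) (hh : MemLp h ⊤ μ)
    (hh0 : ∀ᵐ q ∂μ, h q ≤ 0) {s : Set Q} (hs : MeasurableSet s) :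
    0 ≤ ∫ q in s, e q ∂μ := by
  have hη : MemLp (h - s.indicator (1 : Q → ℝ)) ⊤ μ :=
    hh.sub (memLp_top_const (1 : ℝ) |>.indicator hs)
  have hη0 : ∀ᵐ q ∂μ, (h - s.indicator (1 : Q → ℝ)) q ≤ 0 := by
    filter_upwards [hh0] with q hq
    have : (0 : ℝ) ≤ s.indicator (1 : Q → ℝ) q := Set.indicator_nonneg (fun _ _ => zero_le_one) q
    simp only [Pi.sub_apply]
    linarith
  have key := hvar _ hη hη0
  have hsimp : (fun q => e q * ((h - s.indicator (1 : Q → ℝ)) q - h q)) =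
      fun q => -s.indicator e q := by
    funext q
    by_cases hq : q ∈ s <;> simp [hq]
  rwa [hsimp, integral_neg, integral_indicator hs, neg_nonpos] at key

theorem ae_nonneg (hvar : VariationalIneqNonpos μ e h) (he : Integrable e μ)
    (hh : MemLp h ⊤ μ) (hh0 : ∀ᵐ q ∂μ, h q ≤ 0) : ∀ᵐ q ∂μ, 0 ≤ e q :=
  ae_nonneg_of_forall_setIntegral_nonneg he fun _ hs _ => hvar.setIntegral_nonneg hh hh0 hs

theorem integral_mul_nonneg (hvar : VariationalIneqNonpos μ e h) :
    0 ≤ ∫ q, e q * h q ∂μ := by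
  have key := hvar 0 (memLp_top_const 0) (ae_of_all _ fun _ => le_rfl)
  simpa only [Pi.zero_apply, zero_sub, mul_neg, integral_neg, neg_nonpos] using key

theorem ae_mul_eq_zero (hvar : VariationalIneqNonpos μ e h) (he : Integrable e μ)
    (hh : MemLp h ⊤ μ) (hh0 : ∀ᵐ q ∂μ, h q ≤ 0) : ∀ᵐ q ∂μ, e q * h q = 0 := by
  have hnonneg : 0 ≤ᵐ[μ] fun q => -(e q * h q) := by
    filter_upwards [hvar.ae_nonneg he hh hh0, hh0] with q he_q hh_q
    simpa using mul_nonpos_of_nonneg_of_nonpos he_q hh_q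
  have hint : ∫ q, -(e q * h q) ∂μ = 0 := by
    refine le_antisymm ?_ (integral_nonneg_of_ae hnonneg)
    rw [integral_neg]
    exact neg_nonpos.mpr hvar.integral_mul_nonneg
  filter_upwards [(integral_eq_zero_iff_of_nonneg_ae hnonneg (he.mul_of_top_left hh).neg).mp hint]
    with q hq
  simpa using hq

end VariationalIneqNonpos

end MeasureTheory

theorem stmt7_general
    {Q : Type*} [MeasurableSpace Q] (μ : Measure Q)
    (e h : Q → ℝ)
    (he : Integrable e μ)
    (hh : MemLp h ⊤ μ)
    (hh0 : ∀ᵐ q ∂μ, h q ≤ 0)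
    (hvar : ∀ η : Q → ℝ, MemLp η ⊤ μ → (∀ᵐ q ∂μ, η q ≤ 0) →
      ∫ q, e q * (η q - h q) ∂μ ≤ 0) :
    (∀ᵐ q ∂μ, 0 ≤ e q) ∧ (∀ᵐ q ∂μ, e q * h q = 0) :=
  ⟨VariationalIneqNonpos.ae_nonneg hvar he hh hh0,
    VariationalIneqNonpos.ae_mul_eq_zero hvar he hh hh0⟩

/-- Pointwise complementarity from a variational inequality: if
`∫ e·(η − h) dμ ≤ 0` for every nonpositive `η ∈ L^∞`, then `e ≥ 0` a.e. and
`e·h = 0` a.e. -/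
theorem stmt7
    {Q : Type*} [MeasurableSpace Q] (μ : Measure Q) [SigmaFinite μ]
    (e h : Q → ℝ)
    (he : Integrable e μ)
    (hh : MemLp h ⊤ μ)
    (hh0 : ∀ᵐ q ∂μ, h q ≤ 0)
    (hvar : ∀ η : Q → ℝ, MemLp η ⊤ μ → (∀ᵐ q ∂μ, η q ≤ 0) →
      ∫ q, e q * (η q - h q) ∂μ ≤ 0) :
    (∀ᵐ q ∂μ, 0 ≤ e q) ∧ (∀ᵐ q ∂μ, e q * h q = 0) :=
  stmt7_general μ e h he hh hh0 hvar
end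

section
/- Let Q be a bounded subset of ℝ^d, let α ∈ (0, 1], and let M > 0, γ₁ > 0, k > 0 be constants. Let ū, ȳ, Φ: Q → ℝ be functions with |ȳ(q)| ≤ M and |ū(q)| ≤ M for all q ∈ Q, and let g: Q × ℝ × ℝ → ℝ (playing the role of the partial derivative L_u of the integrand) satisfy: (i) strong monotonicity in the third variable: (g(q, y, u₁) − g(q, y, u₂))·(u₁ − u₂) ≥ γ₁·(u₁ − u₂)² for all q ∈ Q, all y with |y| ≤ M, and all u₁, u₂ with |u₁|, |u₂| ≤ M; (ii) joint Lipschitz continuity in the first two variables: |g(q₁, y₁, u) − g(q₂, y₂, u)| ≤ k·(‖q₁ − q₂‖ + |y₁ − y₂|) for all q₁, q₂ ∈ Q, all y₁, y₂ with |y₁|, |y₂| ≤ M, and all u with |u| ≤ M; (iii) ȳ and Φ are Hölder continuous on Q with exponent α; (iv) the stationarity identity g(q, ȳ(q), ū(q)) = Φ(q) holds for all q ∈ Q. Then ū is Hölder continuous on Q with exponent α, i.e. there exists a constant C ≥ 0 such that |ū(q₁) − ū(q₂)| ≤ C·‖q₁ − q₂‖^α for all q₁, q₂ ∈ Q. -/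
/-! Subtracting the stationarity identities at `q₁` and `q₂` gives
`g(q₁, ȳ₁, ū₁) - g(q₁, ȳ₁, ū₂) = (Φ₁ - Φ₂) + (g(q₂, ȳ₂, ū₂) - g(q₁, ȳ₁, ū₂))`.
Strong monotonicity bounds `γ₁ |ū₁ - ū₂|` by the left side, and the right side is
`O(‖q₁ - q₂‖ ^ α)` by the Hölder continuity of `Φ` and `ȳ` and the Lipschitz continuity
of `g` in `(q, y)`; on a bounded set a Lipschitz bound is also an `α`-Hölder bound. -/

theorem Real.le_rpow_sub_mul_rpow {r D α : ℝ} (hr : 0 ≤ r) (hrD : r ≤ D) (hα : α ≤ 1) :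
    r ≤ D ^ (1 - α) * r ^ α :=
  calc r = r ^ (1 - α) * r ^ α := by
        rw [← Real.rpow_add' hr (by norm_num), sub_add_cancel, Real.rpow_one]
    _ ≤ D ^ (1 - α) * r ^ α := by gcongr

theorem exists_norm_sub_le_mul_rpow_of_isBounded {E : Type*} [SeminormedAddCommGroup E]
    {s : Set E} (hs : Bornology.IsBounded s) {α : ℝ} (hα : α ≤ 1) :
    ∃ C : ℝ, 0 ≤ C ∧ ∀ x ∈ s, ∀ y ∈ s, ‖x - y‖ ≤ C * ‖x - y‖ ^ α := by
  obtain ⟨D, hD⟩ := Metric.isBounded_iff.mp hs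
  refine ⟨max D 0 ^ (1 - α), by positivity, fun x hx y hy => ?_⟩
  refine Real.le_rpow_sub_mul_rpow (norm_nonneg _) ?_ hα
  rw [← dist_eq_norm]
  exact (hD hx hy).trans (le_max_left _ _)

theorem mul_abs_sub_le_abs_sub_of_mul_sq_le {γ a b A B : ℝ}
    (h : γ * (a - b) ^ 2 ≤ (A - B) * (a - b)) : γ * |a - b| ≤ |A - B| := by
  rcases (abs_nonneg (a - b)).eq_or_lt with hab | hab
  · rw [← hab, mul_zero]
    exact abs_nonneg _
  refine le_of_mul_le_mul_right ?_ hab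
  calc γ * |a - b| * |a - b| = γ * (a - b) ^ 2 := by rw [mul_assoc, abs_mul_abs_self, sq]
    _ ≤ (A - B) * (a - b) := h
    _ ≤ |A - B| * |a - b| := by
        rw [← abs_mul]
        exact le_abs_self _

theorem stmt9_general
    {d : ℕ} (Q : Set (EuclideanSpace ℝ (Fin d)))
    (hQbdd : Bornology.IsBounded Q)
    (α : ℝ) (hα1 : α ≤ 1)
    (M γ₁ k : ℝ) (hγ₁ : 0 < γ₁) (hk : 0 < k)
    (ubar ybar Φ : EuclideanSpace ℝ (Fin d) → ℝ)
    (hybdd : ∀ q ∈ Q, |ybar q| ≤ M) (hubdd : ∀ q ∈ Q, |ubar q| ≤ M)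
    (g : EuclideanSpace ℝ (Fin d) → ℝ → ℝ → ℝ)
    -- (i) strong monotonicity in the third variable
    (hmono : ∀ q ∈ Q, ∀ y : ℝ, |y| ≤ M → ∀ u₁ u₂ : ℝ, |u₁| ≤ M → |u₂| ≤ M →
      γ₁ * (u₁ - u₂) ^ 2 ≤ (g q y u₁ - g q y u₂) * (u₁ - u₂))
    -- (ii) joint Lipschitz continuity in the first two variables
    (hlip : ∀ q₁ ∈ Q, ∀ q₂ ∈ Q, ∀ y₁ y₂ : ℝ, |y₁| ≤ M → |y₂| ≤ M →
      ∀ u : ℝ, |u| ≤ M →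
      |g q₁ y₁ u - g q₂ y₂ u| ≤ k * (‖q₁ - q₂‖ + |y₁ - y₂|))
    -- (iii) Hölder continuity of `ybar` and `Φ` on `Q`
    (hyHold : ∃ Cy : ℝ, 0 ≤ Cy ∧ ∀ q₁ ∈ Q, ∀ q₂ ∈ Q,
      |ybar q₁ - ybar q₂| ≤ Cy * ‖q₁ - q₂‖ ^ α)
    (hΦHold : ∃ CΦ : ℝ, 0 ≤ CΦ ∧ ∀ q₁ ∈ Q, ∀ q₂ ∈ Q,
      |Φ q₁ - Φ q₂| ≤ CΦ * ‖q₁ - q₂‖ ^ α)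
    -- (iv) stationarity identity
    (hstat : ∀ q ∈ Q, g q (ybar q) (ubar q) = Φ q) :
    ∃ C : ℝ, 0 ≤ C ∧ ∀ q₁ ∈ Q, ∀ q₂ ∈ Q,
      |ubar q₁ - ubar q₂| ≤ C * ‖q₁ - q₂‖ ^ α := by
  obtain ⟨Cy, hCy, hy⟩ := hyHold
  obtain ⟨CΦ, hCΦ, hΦ⟩ := hΦHold
  obtain ⟨D, hD, hQ⟩ := exists_norm_sub_le_mul_rpow_of_isBounded hQbdd hα1
  refine ⟨(CΦ + k * (D + Cy)) / γ₁, by positivity, fun q₁ h₁ q₂ h₂ => ?_⟩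
  have hg : |g q₂ (ybar q₂) (ubar q₂) - g q₁ (ybar q₁) (ubar q₂)| ≤
      k * (D + Cy) * ‖q₁ - q₂‖ ^ α :=
    calc _ ≤ k * (‖q₁ - q₂‖ + |ybar q₁ - ybar q₂|) := by
          rw [norm_sub_rev, abs_sub_comm (ybar q₁)]
          exact hlip q₂ h₂ q₁ h₁ _ _ (hybdd q₂ h₂) (hybdd q₁ h₁) _ (hubdd q₂ h₂)
      _ ≤ k * (D * ‖q₁ - q₂‖ ^ α + Cy * ‖q₁ - q₂‖ ^ α) := by
          gcongr
          exacts [hQ q₁ h₁ q₂ h₂, hy q₁ h₁ q₂ h₂]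
      _ = _ := by ring
  rw [div_mul_eq_mul_div, le_div_iff₀' hγ₁]
  calc γ₁ * |ubar q₁ - ubar q₂|
      ≤ |g q₁ (ybar q₁) (ubar q₁) - g q₁ (ybar q₁) (ubar q₂)| :=
        mul_abs_sub_le_abs_sub_of_mul_sq_le
          (hmono q₁ h₁ _ (hybdd q₁ h₁) _ _ (hubdd q₁ h₁) (hubdd q₂ h₂))
    _ = |(Φ q₁ - Φ q₂) + (g q₂ (ybar q₂) (ubar q₂) - g q₁ (ybar q₁) (ubar q₂))| := by
        rw [hstat q₁ h₁, hstat q₂ h₂]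
        ring_nf
    _ ≤ CΦ * ‖q₁ - q₂‖ ^ α + k * (D + Cy) * ‖q₁ - q₂‖ ^ α :=
        (abs_add_le _ _).trans (add_le_add (hΦ q₁ h₁ q₂ h₂) hg)
    _ = (CΦ + k * (D + Cy)) * ‖q₁ - q₂‖ ^ α := by ring

/-- Hölder continuity of the optimal control from the stationarity
identity, strong monotonicity of `L_u` in `u` and Hölder continuity of the
optimal state and of the multiplier function `Φ`. -/
theorem stmt9
    {d : ℕ} (Q : Set (EuclideanSpace ℝ (Fin d)))
    (hQbdd : Bornology.IsBounded Q)
    (α : ℝ) (hα0 : 0 < α) (hα1 : α ≤ 1)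
    (M γ₁ k : ℝ) (hM : 0 < M) (hγ₁ : 0 < γ₁) (hk : 0 < k)
    (ubar ybar Φ : EuclideanSpace ℝ (Fin d) → ℝ)
    (hybdd : ∀ q ∈ Q, |ybar q| ≤ M) (hubdd : ∀ q ∈ Q, |ubar q| ≤ M)
    (g : EuclideanSpace ℝ (Fin d) → ℝ → ℝ → ℝ)
    -- (i) strong monotonicity in the third variable
    (hmono : ∀ q ∈ Q, ∀ y : ℝ, |y| ≤ M → ∀ u₁ u₂ : ℝ, |u₁| ≤ M → |u₂| ≤ M →
      γ₁ * (u₁ - u₂) ^ 2 ≤ (g q y u₁ - g q y u₂) * (u₁ - u₂))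
    -- (ii) joint Lipschitz continuity in the first two variables
    (hlip : ∀ q₁ ∈ Q, ∀ q₂ ∈ Q, ∀ y₁ y₂ : ℝ, |y₁| ≤ M → |y₂| ≤ M →
      ∀ u : ℝ, |u| ≤ M →
      |g q₁ y₁ u - g q₂ y₂ u| ≤ k * (‖q₁ - q₂‖ + |y₁ - y₂|))
    -- (iii) Hölder continuity of `ybar` and `Φ` on `Q`
    (hyHold : ∃ Cy : ℝ, 0 ≤ Cy ∧ ∀ q₁ ∈ Q, ∀ q₂ ∈ Q,
      |ybar q₁ - ybar q₂| ≤ Cy * ‖q₁ - q₂‖ ^ α)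
    (hΦHold : ∃ CΦ : ℝ, 0 ≤ CΦ ∧ ∀ q₁ ∈ Q, ∀ q₂ ∈ Q,
      |Φ q₁ - Φ q₂| ≤ CΦ * ‖q₁ - q₂‖ ^ α)
    -- (iv) stationarity identity
    (hstat : ∀ q ∈ Q, g q (ybar q) (ubar q) = Φ q) :
    ∃ C : ℝ, 0 ≤ C ∧ ∀ q₁ ∈ Q, ∀ q₂ ∈ Q,
      |ubar q₁ - ubar q₂| ≤ C * ‖q₁ - q₂‖ ^ α :=
  stmt9_general Q hQbdd α hα1 M γ₁ k hγ₁ hk ubar ybar Φ hybdd hubdd g hmono hlip hyHold hΦHold hstat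
end
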